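/- For the surface-mounted permanent-magnet synchronous machine (the non-salient case L_d = L_q = L₀), the observability determinant reduces to Δ_y = ψ_r²·ω/L₀²; consequently, if ψ_r ≠ 0 then Δ_y ≠ 0 if and only if ω ≠ 0, so the rank condition fails exactly at standstill. -/

import Mathlib

open Matrix Real

/-- The PMSM (2×2) inductance matrix 𝔏(θ). -/
noncomputable def Lmat2 (Ld Lq θ : ℝ) : Matrix (Fin 2) (Fin 2) ℝ :=
  !![(Ld + Lq)/2 + (Ld - Lq)/2 * Real.cos (2*θ), (Ld - Lq)/2 * Real.sin (2*θ);
     (Ld - Lq)/2 * Real.sin (2*θ), (Ld + Lq)/2 - (Ld - Lq)/2 * Real.cos (2*θ)]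

/-- The first entrywise θ-derivative 𝔏'(θ). -/
noncomputable def Lmat2' (Ld Lq θ : ℝ) : Matrix (Fin 2) (Fin 2) ℝ :=
  !![-2 * ((Ld - Lq)/2) * Real.sin (2*θ), 2 * ((Ld - Lq)/2) * Real.cos (2*θ);
     2 * ((Ld - Lq)/2) * Real.cos (2*θ), 2 * ((Ld - Lq)/2) * Real.sin (2*θ)]

/-- The second entrywise θ-derivative 𝔏''(θ). -/
noncomputable def Lmat2'' (Ld Lq θ : ℝ) : Matrix (Fin 2) (Fin 2) ℝ :=
  !![-4 * ((Ld - Lq)/2) * Real.cos (2*θ), -4 * ((Ld - Lq)/2) * Real.sin (2*θ);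
     -4 * ((Ld - Lq)/2) * Real.sin (2*θ), 4 * ((Ld - Lq)/2) * Real.cos (2*θ)]

/-- The rotor permanent-magnet flux vector ψ(θ). -/
noncomputable def psiVec (ψr θ : ℝ) : Fin 2 → ℝ := ψr • ![Real.cos θ, Real.sin θ]

/-- Its θ-derivative ψ'(θ). -/
noncomputable def psiVec' (ψr θ : ℝ) : Fin 2 → ℝ := ψr • ![-Real.sin θ, Real.cos θ]

/-- Its second θ-derivative ψ''(θ) = −ψ(θ). -/
noncomputable def psiVec'' (ψr θ : ℝ) : Fin 2 → ℝ := -psiVec ψr θ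

/-- The 2×2 rotation matrix R(θ). -/
noncomputable def Rmat (θ : ℝ) : Matrix (Fin 2) (Fin 2) ℝ :=
  !![Real.cos θ, -Real.sin θ;
     Real.sin θ, Real.cos θ]

/-- Its entrywise θ-derivative R'(θ). -/
noncomputable def Rmat' (θ : ℝ) : Matrix (Fin 2) (Fin 2) ℝ :=
  !![-Real.sin θ, -Real.cos θ;
     Real.cos θ, -Real.sin θ]

/-- The PMSM observability determinant Δ_y, built from
c₁ = −𝔏(θ)⁻¹·(𝔏'(θ)·I + ψ'(θ)) and c₂ = −𝔏(θ)⁻¹·(𝔏'(θ)·dI + ω·(𝔏''(θ)·I + ψ''(θ))),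
where I = R(θ)·(i_d, i_q)ᵀ and dI = R(θ)·(di_d, di_q)ᵀ + ω·R'(θ)·(i_d, i_q)ᵀ. -/
noncomputable def deltaY2 (Ld Lq ψr θ ω i_d i_q di_d di_q : ℝ) : ℝ :=
  let I : Fin 2 → ℝ := Rmat θ *ᵥ ![i_d, i_q]
  let dI : Fin 2 → ℝ := Rmat θ *ᵥ ![di_d, di_q] + ω • (Rmat' θ *ᵥ ![i_d, i_q])
  let c₁ : Fin 2 → ℝ := -((Lmat2 Ld Lq θ)⁻¹ *ᵥ (Lmat2' Ld Lq θ *ᵥ I + psiVec' ψr θ))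
  let c₂ : Fin 2 → ℝ :=
    -((Lmat2 Ld Lq θ)⁻¹ *ᵥ (Lmat2' Ld Lq θ *ᵥ dI + ω • (Lmat2'' Ld Lq θ *ᵥ I + psiVec'' ψr θ)))
  c₁ 0 * c₂ 1 - c₁ 1 * c₂ 0

/-- For the SPMSM (non-salient case L_d = L_q = L₀), the observability
determinant reduces to Δ_y = ψ_r²·ω/L₀²; hence if ψ_r ≠ 0 then Δ_y ≠ 0 iff ω ≠ 0,
so the rank condition fails exactly at standstill. -/
theorem spmsm_deltaY (Ld Lq : ℝ) (hLd : Ld ≠ 0) (hLq : Lq ≠ 0) (ψr : ℝ)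
    (hsal : Ld = Lq) (θ ω i_d i_q di_d di_q : ℝ) :
    deltaY2 Ld Lq ψr θ ω i_d i_q di_d di_q = ψr ^ 2 * ω / Ld ^ 2 ∧
    (ψr ≠ 0 → (deltaY2 Ld Lq ψr θ ω i_d i_q di_d di_q ≠ 0 ↔ ω ≠ 0)) := by
  subst hsal
  have key : deltaY2 Ld Ld ψr θ ω i_d i_q di_d di_q = ψr ^ 2 * ω / Ld ^ 2 := by
    have hinv : (Lmat2 Ld Ld θ)⁻¹ = !![Ld⁻¹, 0; 0, Ld⁻¹] := by
      have h : Lmat2 Ld Ld θ = !![Ld, 0; 0, Ld] := by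
        unfold Lmat2; norm_num
      rw [h, Matrix.inv_def, Matrix.adjugate_fin_two, Matrix.det_fin_two_of]
      simp [Ring.inverse_eq_inv']
      rw [mul_assoc, inv_mul_cancel₀ hLd, mul_one]
    unfold deltaY2 Lmat2' Lmat2'' psiVec'' psiVec psiVec' Rmat Rmat'
    rw [hinv]
    simp [Matrix.mulVec, dotProduct, Fin.sum_univ_two]
    field_simp
    linear_combination (ψr^2 * ω) * Real.sin_sq_add_cos_sq θ
  refine ⟨key, fun hψ => ?_⟩
  rw [key]
  constructor
  · intro h hω; apply h; rw [hω]; ring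
  · intro hω
    have : ψr ^ 2 * ω ≠ 0 := mul_ne_zero (pow_ne_zero _ hψ) hω
    exact div_ne_zero this (pow_ne_zero _ hLd)
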